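/- For every even integer n = 2k ≥ 2, there exists a positive integer d such that bc_d(K_n) = 2d(n-1)/n; for every odd integer n = 2k+1, there exists a positive integer d such that bc_d(K_n) = 2dn/(n+1). -/

import Mathlib

open Finset

/-- `X, Y` form a biclique (complete bipartite subgraph) of `G`. -/
def SimpleGraph.IsBiclique {V : Type*} (G : SimpleGraph V) (X Y : Finset V) : Prop :=
  Disjoint X Y ∧ ∀ x ∈ X, ∀ y ∈ Y, G.Adj x y

/-- `L` is a `d`-biclique cover of `G`: a list (multiset, repetition allowed) of bicliques
covering every edge at least `d` times. -/
def SimpleGraph.IsBicliqueCover {V : Type*} [DecidableEq V] (G : SimpleGraph V) (d : ℕ)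
    (L : List (Finset V × Finset V)) : Prop :=
  (∀ p ∈ L, G.IsBiclique p.1 p.2) ∧
  ∀ e ∈ G.edgeSet, d ≤ L.countP (fun p => decide (∃ x ∈ p.1, ∃ y ∈ p.2, e = s(x, y)))

/-- The `d`-biclique covering number `bc_d(G)`. -/
noncomputable def SimpleGraph.bcd {V : Type*} [DecidableEq V] (G : SimpleGraph V) (d : ℕ) : ℕ :=
  sInf {n | ∃ L, G.IsBicliqueCover d L ∧ L.length = n}

/-- `B(G)`: the maximum number of edges among the bicliques of `G`. -/
noncomputable def SimpleGraph.bicliqueMax {V : Type*} (G : SimpleGraph V) : ℕ :=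
  sSup {n | ∃ X Y, G.IsBiclique X Y ∧ n = X.card * Y.card}


lemma countP_toList' {α : Type*} (s : Finset α) (p : α → Bool) :
    s.toList.countP p = (s.filter (fun a => p a)).card := by
  have : List.countP p s.toList = Multiset.countP (fun a => p a) (s.toList : Multiset α) := by
    rw [Multiset.coe_countP]
    simp
  rw [this, Finset.coe_toList, Multiset.countP_eq_card_filter]
  rfl

lemma sum_countP' {α β : Type*} [DecidableEq β] (S : Finset β) (P : β → α → Bool) :
    ∀ L : List α, ∑ e ∈ S, L.countP (P e)
      = (L.map (fun p => (S.filter (fun e => P e p)).card)).sum := by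
  intro L
  induction L with
  | nil => simp
  | cons a l ih =>
    simp only [List.countP_cons, List.map_cons, List.sum_cons, Finset.sum_add_distrib, ih]
    rw [add_comm]
    congr 1
    rw [Finset.card_filter]


lemma cov_card {n : ℕ} {X Y : Finset (Fin n)} (hd : Disjoint X Y) :
    ((⊤ : SimpleGraph (Fin n)).edgeFinset.filter
      (fun e => ∃ x ∈ X, ∃ y ∈ Y, e = s(x, y))).card = X.card * Y.card := by
  have himg : (⊤ : SimpleGraph (Fin n)).edgeFinset.filter
      (fun e => ∃ x ∈ X, ∃ y ∈ Y, e = s(x, y))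
      = (X ×ˢ Y).image (fun q => s(q.1, q.2)) := by
    ext e
    simp only [Finset.mem_filter, Finset.mem_image, Finset.mem_product,
      SimpleGraph.mem_edgeFinset, SimpleGraph.mem_edgeSet, Prod.exists]
    constructor
    · rintro ⟨-, x, hx, y, hy, rfl⟩
      exact ⟨x, y, ⟨hx, hy⟩, rfl⟩
    · rintro ⟨x, y, ⟨hx, hy⟩, rfl⟩
      exact ⟨by simp only [SimpleGraph.mem_edgeSet, SimpleGraph.top_adj]; exact fun h : x = y => Finset.disjoint_left.mp hd hx (h ▸ hy),
        x, hx, y, hy, rfl⟩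
  rw [himg, Finset.card_image_of_injOn, Finset.card_product]
  rintro ⟨a, b⟩ hab ⟨c, d⟩ hcd h
  simp only [Finset.mem_coe, Finset.mem_product] at hab hcd
  simp only [Sym2.eq_iff] at h
  rcases h with ⟨rfl, rfl⟩ | ⟨rfl, rfl⟩
  · rfl
  · exact absurd hab.1 (fun hh => Finset.disjoint_left.mp hd hh hcd.2)


lemma count_subsets {n k : ℕ} (hk : 1 ≤ k) {u v : Fin n} (huv : u ≠ v) :
    ((Finset.univ.powersetCard k).filter (fun X => u ∈ X ∧ v ∉ X)).card
      = (n - 2).choose (k - 1) := by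
  have hcard : (Finset.univ \ {u, v} : Finset (Fin n)).card = n - 2 := by
    rw [Finset.card_sdiff_of_subset (by simp)]
    simp [Finset.card_insert_of_notMem, huv]
  rw [← hcard, ← Finset.card_powersetCard]
  apply Finset.card_bij (fun X _ => X.erase u)
  · rintro X hX
    simp only [Finset.mem_filter, Finset.mem_powersetCard] at hX
    obtain ⟨⟨-, hXcard⟩, hu, hv⟩ := hX
    rw [Finset.mem_powersetCard]
    constructor
    · intro a ha
      simp only [Finset.mem_sdiff, Finset.mem_univ, true_and, Finset.mem_insert,
        Finset.mem_singleton]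
      rcases Finset.mem_erase.mp ha with ⟨hau, haX⟩
      exact fun h => by rcases h with rfl | rfl; exact hau rfl; exact hv haX
    · rw [Finset.card_erase_of_mem hu, hXcard]
  · rintro X hX X' hX' h
    simp only [Finset.mem_filter] at hX hX'
    have := congrArg (insert u) h
    rwa [Finset.insert_erase hX.2.1, Finset.insert_erase hX'.2.1] at this
  · rintro Z hZ
    rw [Finset.mem_powersetCard] at hZ
    obtain ⟨hZsub, hZcard⟩ := hZ
    have hu : u ∉ Z := fun h => by simpa using (hZsub h)
    have hv : v ∉ Z := fun h => by simpa [huv.symm] using (hZsub h)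
    refine ⟨insert u Z, ?_, ?_⟩
    · simp only [Finset.mem_filter, Finset.mem_powersetCard]
      refine ⟨⟨Finset.subset_univ _, ?_⟩, Finset.mem_insert_self _ _, ?_⟩
      · rw [Finset.card_insert_of_notMem hu, hZcard]
        omega
      · simp [huv.symm, hv]
    · rw [Finset.erase_insert hu]


lemma prod_bound {n a b : ℕ} (h : a + b ≤ n) : a * b ≤ (n / 2) * (n - n / 2) := by
  have h4 : 4 * (a * b) ≤ (a + b) * (a + b) := by nlinarith [two_mul_le_add_sq a b]
  have h5 : 4 * (a * b) ≤ n * n := le_trans h4 (Nat.mul_le_mul h h)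
  rcases Nat.even_or_odd n with ⟨k, rfl⟩ | ⟨k, rfl⟩
  · have hd : (k + k) / 2 = k := by omega
    have hs : k + k - k = k := by omega
    rw [hd, hs]
    have h6 : 4 * (a * b) ≤ 4 * (k * k) := by nlinarith
    linarith
  · have hd : (2 * k + 1) / 2 = k := by omega
    have hs : 2 * k + 1 - k = k + 1 := by omega
    rw [hd, hs]
    have h6 : 4 * (a * b) ≤ 4 * (k * k + k) + 1 := by nlinarith
    nlinarith

lemma cover_count {n k : ℕ} (hk : 1 ≤ k) {u v : Fin n} (huv : u ≠ v) :
    ((Finset.univ.powersetCard k).toList.map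
        (fun X : Finset (Fin n) => (X, Xᶜ))).countP
        (fun p => decide (∃ x ∈ p.1, ∃ y ∈ p.2, s(u, v) = s(x, y)))
      = 2 * (n - 2).choose (k - 1) := by
  rw [List.countP_map, countP_toList']
  simp only [Function.comp_apply]
  have hQ : ∀ X : Finset (Fin n),
      ((∃ x ∈ X, ∃ y ∈ Xᶜ, s(u, v) = s(x, y)) ↔
        ((u ∈ X ∧ v ∉ X) ∨ (v ∈ X ∧ u ∉ X))) := by
    intro X
    constructor
    · rintro ⟨x, hx, y, hy, hxy⟩
      rw [Finset.mem_compl] at hy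
      rw [Sym2.eq_iff] at hxy
      rcases hxy with ⟨rfl, rfl⟩ | ⟨rfl, rfl⟩
      · exact Or.inl ⟨hx, hy⟩
      · exact Or.inr ⟨hx, hy⟩
    · rintro (⟨h1, h2⟩ | ⟨h1, h2⟩)
      · exact ⟨u, h1, v, Finset.mem_compl.mpr h2, rfl⟩
      · exact ⟨v, h1, u, Finset.mem_compl.mpr h2, Sym2.eq_swap⟩
  have : (Finset.univ.powersetCard k).filter
        (fun X : Finset (Fin n) => decide (∃ x ∈ X, ∃ y ∈ Xᶜ, s(u, v) = s(x, y)))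
      = (Finset.univ.powersetCard k).filter
        (fun X : Finset (Fin n) => (u ∈ X ∧ v ∉ X) ∨ (v ∈ X ∧ u ∉ X)) := by
    apply Finset.filter_congr
    intro X _
    simp only [decide_eq_true_eq]
    exact hQ X
  rw [this, Finset.filter_or, Finset.card_union_of_disjoint, count_subsets hk huv,
    count_subsets hk huv.symm, two_mul]
  rw [Finset.disjoint_left]
  rintro X hX hX'
  rw [Finset.mem_filter] at hX hX'
  exact hX'.2.2 hX.2.1

lemma main_count (n : ℕ) (hn : 2 ≤ n) :
    (⊤ : SimpleGraph (Fin n)).bcd (2 * (n - 2).choose (n / 2 - 1)) = n.choose (n / 2) ∧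
    2 * (n - 2).choose (n / 2 - 1) * n.choose 2
      = n.choose (n / 2) * ((n / 2) * (n - n / 2)) := by
  set k := n / 2 with hkdef
  have hk1 : 1 ≤ k := by omega
  have hkn : k < n := by omega
  set c := 2 * (n - 2).choose (k - 1) with hc
  set L₀ := (Finset.univ.powersetCard k).toList.map
    (fun X : Finset (Fin n) => (X, Xᶜ)) with hL
  have hE : (⊤ : SimpleGraph (Fin n)).edgeFinset.card = n.choose 2 := by
    rw [SimpleGraph.card_edgeFinset_top_eq_card_choose_two, Fintype.card_fin]
  have hlen : L₀.length = n.choose k := by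
    rw [hL, List.length_map, Finset.length_toList, Finset.card_powersetCard,
      Finset.card_univ, Fintype.card_fin]
  have hcount : ∀ e ∈ (⊤ : SimpleGraph (Fin n)).edgeFinset,
      L₀.countP (fun p => decide (∃ x ∈ p.1, ∃ y ∈ p.2, e = s(x, y))) = c := by
    intro e
    induction e using Sym2.ind with
    | _ u v =>
      intro he
      have huv : u ≠ v := by
        rw [SimpleGraph.mem_edgeFinset, SimpleGraph.mem_edgeSet,
          SimpleGraph.top_adj] at he
        exact he
      exact cover_count hk1 huv
  have hbic : ∀ p ∈ L₀, (⊤ : SimpleGraph (Fin n)).IsBiclique p.1 p.2 := by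
    intro p hp
    rw [hL, List.mem_map] at hp
    obtain ⟨X, -, rfl⟩ := hp
    refine ⟨disjoint_compl_right, ?_⟩
    intro x hx y hy
    rw [SimpleGraph.top_adj]
    intro h
    exact (Finset.mem_compl.mp hy) (h ▸ hx)
  have hcover : (⊤ : SimpleGraph (Fin n)).IsBicliqueCover c L₀ := by
    refine ⟨hbic, fun e he => ?_⟩
    exact (hcount e (SimpleGraph.mem_edgeFinset.mpr he)).symm.le.trans_eq (by congr!)
  have hfilterfix : ∀ p : Finset (Fin n) × Finset (Fin n),
      ((⊤ : SimpleGraph (Fin n)).edgeFinset.filter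
        (fun e => decide (∃ x ∈ p.1, ∃ y ∈ p.2, e = s(x, y)) = true)).card
      = ((⊤ : SimpleGraph (Fin n)).edgeFinset.filter (fun e => ∃ x ∈ p.1, ∃ y ∈ p.2, e = s(x, y))).card := by
    intro p
    congr 1
    apply Finset.filter_congr
    intro e _
    simp
  have hB : ∀ p ∈ L₀,
      ((⊤ : SimpleGraph (Fin n)).edgeFinset.filter (fun e => ∃ x ∈ p.1, ∃ y ∈ p.2, e = s(x, y))).card
        = k * (n - k) := by
    intro p hp
    rw [hL, List.mem_map] at hp
    obtain ⟨X, hX, rfl⟩ := hp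
    rw [Finset.mem_toList, Finset.mem_powersetCard] at hX
    rw [cov_card disjoint_compl_right, Finset.card_compl, Fintype.card_fin, hX.2]
  have hkey : c * n.choose 2 = n.choose k * (k * (n - k)) := by
    have h1 := sum_countP' (⊤ : SimpleGraph (Fin n)).edgeFinset
      (fun e p => decide (∃ x ∈ p.1, ∃ y ∈ p.2, e = s(x, y))) L₀
    have h2 : ∑ e ∈ (⊤ : SimpleGraph (Fin n)).edgeFinset,
        L₀.countP (fun p => decide (∃ x ∈ p.1, ∃ y ∈ p.2, e = s(x, y)))
        = n.choose 2 * c := by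
      rw [Finset.sum_congr rfl hcount, Finset.sum_const, smul_eq_mul, hE]
    have h3 : (L₀.map (fun p => ((⊤ : SimpleGraph (Fin n)).edgeFinset.filter
        (fun e => decide (∃ x ∈ p.1, ∃ y ∈ p.2, e = s(x, y)) = true)).card)).sum
        = n.choose k * (k * (n - k)) := by
      rw [List.sum_eq_card_nsmul _ (k * (n - k)), List.length_map, hlen, smul_eq_mul]
      intro x hx
      rw [List.mem_map] at hx
      obtain ⟨p, hp, rfl⟩ := hx
      rw [hfilterfix p, hB p hp]
    rw [h2, h3] at h1
    rw [mul_comm c, h1]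
  refine ⟨?_, hkey⟩
  have hub : (⊤ : SimpleGraph (Fin n)).bcd c ≤ n.choose k := by
    rw [SimpleGraph.bcd]
    exact Nat.sInf_le ⟨L₀, hcover, hlen⟩
  have hpos : 0 < k * (n - k) := Nat.mul_pos (by omega) (by omega)
  have hlb : ∀ m ∈ {m | ∃ L, (⊤ : SimpleGraph (Fin n)).IsBicliqueCover c L ∧ L.length = m}, n.choose k ≤ m := by
    rintro m ⟨L, ⟨hb, hcov⟩, rfl⟩
    have h1 := sum_countP' (⊤ : SimpleGraph (Fin n)).edgeFinset
      (fun e p => decide (∃ x ∈ p.1, ∃ y ∈ p.2, e = s(x, y))) L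
    have h2 : n.choose 2 * c ≤ ∑ e ∈ (⊤ : SimpleGraph (Fin n)).edgeFinset,
        L.countP (fun p => decide (∃ x ∈ p.1, ∃ y ∈ p.2, e = s(x, y))) := by
      rw [← hE, ← smul_eq_mul]
      exact Finset.card_nsmul_le_sum _ _ _
        (fun e he => (hcov e (SimpleGraph.mem_edgeFinset.mp he)).trans_eq (by congr!))
    have h3 : (L.map (fun p => ((⊤ : SimpleGraph (Fin n)).edgeFinset.filter
        (fun e => decide (∃ x ∈ p.1, ∃ y ∈ p.2, e = s(x, y)) = true)).card)).sum
        ≤ L.length * (k * (n - k)) := by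
      have hb2 : ∀ x ∈ L.map (fun p => ((⊤ : SimpleGraph (Fin n)).edgeFinset.filter
          (fun e => decide (∃ x ∈ p.1, ∃ y ∈ p.2, e = s(x, y)) = true)).card),
          x ≤ k * (n - k) := by
        intro x hx
        rw [List.mem_map] at hx
        obtain ⟨p, hp, rfl⟩ := hx
        obtain ⟨hdisj, -⟩ := hb p hp
        rw [hfilterfix p, cov_card hdisj]
        apply prod_bound
        rw [← Finset.card_union_of_disjoint hdisj]
        calc (p.1 ∪ p.2).card ≤ (Finset.univ : Finset (Fin n)).card :=
              Finset.card_le_univ _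
          _ = n := by rw [Finset.card_univ, Fintype.card_fin]
      have := List.sum_le_card_nsmul _ (k * (n - k)) hb2
      rwa [List.length_map, smul_eq_mul] at this
    have hfin : n.choose k * (k * (n - k)) ≤ L.length * (k * (n - k)) := by
      calc n.choose k * (k * (n - k)) = c * n.choose 2 := hkey.symm
        _ = n.choose 2 * c := mul_comm _ _
        _ ≤ _ := h2
        _ = _ := h1
        _ ≤ L.length * (k * (n - k)) := h3
    exact Nat.le_of_mul_le_mul_right hfin hpos
  have hne : {m | ∃ L, (⊤ : SimpleGraph (Fin n)).IsBicliqueCover c L ∧ L.length = m}.Nonempty :=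
    ⟨_, L₀, hcover, hlen⟩
  have hge : n.choose k ≤ (⊤ : SimpleGraph (Fin n)).bcd c := by
    rw [SimpleGraph.bcd]
    exact hlb _ (Nat.sInf_mem hne)
  exact le_antisymm hub hge

theorem stmt_12 (n : ℕ) (hn : 2 ≤ n) :
    (Even n → ∃ d : ℕ, 0 < d ∧
      ((⊤ : SimpleGraph (Fin n)).bcd d : ℚ) = 2 * d * (n - 1) / n) ∧
    (Odd n → ∃ d : ℕ, 0 < d ∧
      ((⊤ : SimpleGraph (Fin n)).bcd d : ℚ) = 2 * d * n / (n + 1)) := by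
  obtain ⟨hbcd, hkey⟩ := main_count n hn
  set k := n / 2 with hk
  set c := 2 * (n - 2).choose (k - 1) with hc
  set N := n.choose k with hN
  have hk1 : 1 ≤ k := by omega
  have hcpos : 0 < c := Nat.mul_pos two_pos (Nat.choose_pos (by omega))
  constructor
  · rintro ⟨m, hm⟩
    have hn2 : n = 2 * k := by omega
    refine ⟨c, hcpos, ?_⟩
    rw [hbcd]
    have hch : n.choose 2 = k * (n - 1) := by
      rw [Nat.choose_two_right]
      have h' : n * (n - 1) = 2 * (k * (n - 1)) := by rw [hn2]; ring
      rw [h', Nat.mul_div_cancel_left _ two_pos]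
    rw [hch, show n - k = k by omega] at hkey
    have h2 : c * (n - 1) = N * k :=
      Nat.eq_of_mul_eq_mul_left (show 0 < k by omega)
        (by rw [show k * (c * (n - 1)) = c * (k * (n - 1)) by ring, hkey]; ring)
    have hnat : N * n = 2 * c * (n - 1) := by
      calc N * n = 2 * (N * k) := by rw [hn2]; ring
        _ = 2 * (c * (n - 1)) := by rw [h2]
        _ = 2 * c * (n - 1) := by ring
    have hn0 : (n : ℚ) ≠ 0 := Nat.cast_ne_zero.mpr (by omega)
    rw [eq_div_iff hn0]
    have h1 : ((n : ℚ)) - 1 = ((n - 1 : ℕ) : ℚ) := by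
      rw [Nat.cast_sub (by omega : 1 ≤ n)]
      norm_num
    rw [h1]
    exact_mod_cast hnat
  · rintro ⟨m, hm⟩
    have hn2 : n = 2 * k + 1 := by omega
    refine ⟨c, hcpos, ?_⟩
    rw [hbcd]
    have hch : n.choose 2 = k * n := by
      rw [Nat.choose_two_right]
      have h' : n * (n - 1) = 2 * (k * n) := by rw [hn2, Nat.add_sub_cancel]; ring
      rw [h', Nat.mul_div_cancel_left _ two_pos]
    rw [hch, show n - k = k + 1 by omega] at hkey
    have h2 : c * n = N * (k + 1) :=
      Nat.eq_of_mul_eq_mul_left (show 0 < k by omega)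
        (by rw [show k * (c * n) = c * (k * n) by ring, hkey]; ring)
    have hnat : N * (n + 1) = 2 * c * n := by
      calc N * (n + 1) = 2 * (N * (k + 1)) := by rw [hn2]; ring
        _ = 2 * (c * n) := by rw [h2]
        _ = 2 * c * n := by ring
    have hn0 : (n : ℚ) + 1 ≠ 0 := by positivity
    rw [eq_div_iff hn0]
    exact_mod_cast hnat
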